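/- For all positive integers r and n with r even, F_{3r} * (∑_{k=1}^n F_{2rk}^3) = F_{rn}^2 * F_{rn+r}^2 * (L_{rn} * L_{rn+r} + L_r). -/

import Mathlib

open Finset

def L : ℕ → ℤ
  | 0 => 2
  | 1 => 1
  | n + 2 => L (n + 1) + L n

def F (n : ℕ) : ℤ := Nat.fib n

/-! By Binet's formulas `F m = (φ^m - ψ^m)/√5` and `L m = φ^m + ψ^m`, and for even `m` we have
`ψ^m = φ^(-m)`. With `u = φ^r` and `t = φ^(rn)`, the `(n+1)`-st summand `F_{3r} F_{2r(n+1)}^3` is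
then the difference of the right-hand sides at `n + 1` and at `n`: a Laurent polynomial identity
in `t` and `u` in which all powers of `√5` cancel. The sum telescopes, starting from `F_0 = 0`. -/

open Real
open scoped goldenRatio

lemma coe_L_eq (n : ℕ) : (L n : ℝ) = φ ^ n + ψ ^ n := by
  induction n using Nat.twoStepInduction with
  | zero => norm_num [L]
  | one => simp [L, goldenRatio_add_goldenConj]
  | more n ih₀ ih₁ =>
    rw [L, Int.cast_add, ih₀, ih₁, pow_add φ n 2, pow_add ψ n 2, goldenRatio_sq, goldenConj_sq]
    ring

lemma goldenConj_pow_of_even {m : ℕ} (hm : Even m) : ψ ^ m = (φ ^ m)⁻¹ := by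
  rw [← inv_pow, inv_goldenRatio, hm.neg_pow]

lemma coe_F_eq_of_even {m : ℕ} (hm : Even m) : (F m : ℝ) = (φ ^ m - (φ ^ m)⁻¹) / √5 := by
  rw [F, Int.cast_natCast, coe_fib_eq, goldenConj_pow_of_even hm]

lemma coe_L_eq_of_even {m : ℕ} (hm : Even m) : (L m : ℝ) = φ ^ m + (φ ^ m)⁻¹ := by
  rw [coe_L_eq, goldenConj_pow_of_even hm]

lemma F_three_mul_mul_F_cube_telescope {r m : ℕ} (hr : Even r) (hm : Even m) :
    F (3 * r) * F (2 * (m + r)) ^ 3 =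
      F (m + r) ^ 2 * F (m + r + r) ^ 2 * (L (m + r) * L (m + r + r) + L r) -
        F m ^ 2 * F (m + r) ^ 2 * (L m * L (m + r) + L r) := by
  have hmr : Even (m + r) := hm.add hr
  apply Int.cast_injective (α := ℝ)
  push_cast
  rw [coe_F_eq_of_even (hr.mul_left 3), coe_F_eq_of_even (even_two_mul _),
    coe_F_eq_of_even hmr, coe_F_eq_of_even (hmr.add hr), coe_F_eq_of_even hm,
    coe_L_eq_of_even hmr, coe_L_eq_of_even (hmr.add hr), coe_L_eq_of_even hr, coe_L_eq_of_even hm]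
  have hs : √5 ≠ 0 := by positivity
  have hu : φ ^ r ≠ 0 := pow_ne_zero _ goldenRatio_ne_zero
  have ht : φ ^ m ≠ 0 := pow_ne_zero _ goldenRatio_ne_zero
  simp only [pow_mul', pow_add]
  generalize φ ^ r = u at *
  generalize φ ^ m = t at *
  field_simp
  ring

theorem stmt15_general (r n : ℕ) (hre : Even r) :
    F (3 * r) * ∑ k ∈ Finset.Icc 1 n, F (2 * r * k) ^ 3 =
      F (r * n) ^ 2 * F (r * n + r) ^ 2 * (L (r * n) * L (r * n + r) + L r) := by
  induction n with
  | zero => simp [F]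
  | succ n ih =>
    rw [sum_Icc_succ_top (by omega), mul_add, ih, show r * (n + 1) = r * n + r by ring,
      show 2 * r * (n + 1) = 2 * (r * n + r) by ring,
      F_three_mul_mul_F_cube_telescope hre (hre.mul_right n)]
    ring

theorem stmt15 (r n : ℕ) (hr : 0 < r) (hn : 0 < n) (hre : Even r) :
    F (3 * r) * ∑ k ∈ Finset.Icc 1 n, F (2 * r * k) ^ 3 =
      F (r * n) ^ 2 * F (r * n + r) ^ 2 * (L (r * n) * L (r * n + r) + L r) :=
  stmt15_general r n hre
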